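/- Let G be a finite simple graph with positive edge weights w, let M be a matching in G, and let k ≥ 1. Let aug(M,k) be a set of pairwise vertex-disjoint (M,[1,k])-augmenting paths of maximum total gain, and let aug^{ig}(M,k) be an index-greedy set of augmenting paths, i.e. a maximal independent set in the intersection graph I(M) obtained by processing the (M,[1,k])-augmenting paths in nonincreasing order of gain-index γ_M(p) = ⌈log₂ gain_M(p)⌉ and adding each path iff it is vertex-disjoint from all previously added paths. Then gain(aug^{ig}(M,k)) ≥ (1/(2(k+1))) · gain(aug(M,k)). -/

import Mathlib

/-! Each path `P i` meets a greedy path `Q (f i)` of gain-index at least its own, so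
`gain (P i) ≤ 2 · gain (Q (f i))`. Charge `P i` to `Q (f i)` at a common vertex `x`, represented
by the matching edge covering `x`, or by `x` itself if `x` is free. An augmenting path contains
the matching edge of each of its covered vertices, so distinct (vertex-disjoint) `P i` charged
to the same `Q j` get distinct representatives. Along an alternating path or even cycle, the
matching edges plus the free vertices are at most one more than the non-matching edges, so
`Q j` offers at most `k + 1` representatives, and `gain P ≤ 2 (k + 1) · gain Q`. -/

/-- The set of vertices covered by a finite set `M` of edges. -/
def coveredVerts {V : Type*} (M : Finset (Sym2 V)) : Set V := {x : V | ∃ e ∈ M, x ∈ e}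

/-- `M` is a matching in `G`: a finite set of edges of `G` that are pairwise
non-adjacent. -/
def IsMatchingFinset {V : Type*} (G : SimpleGraph V) (M : Finset (Sym2 V)) : Prop :=
  (↑M : Set (Sym2 V)) ⊆ G.edgeSet ∧ ∀ e ∈ M, ∀ f ∈ M, e ≠ f → ∀ x : V, x ∈ e → x ∉ f

/-- The gain of a walk `p` w.r.t. the matching `M` and the weights `w`:
`w(E(p) ∖ M) − w(E(p) ∩ M)`. -/
def walkGain {V : Type*} [DecidableEq V] {G : SimpleGraph V} (w : Sym2 V → ℝ)
    (M : Finset (Sym2 V)) {u v : V} (p : G.Walk u v) : ℝ :=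
  (∑ e ∈ p.edges.toFinset \ M, w e) - ∑ e ∈ p.edges.toFinset ∩ M, w e

/-- `p` is an `M`-augmenting walk for the weighted matching problem: it is a nontrivial
simple path or simple cycle whose edges alternate between `M` and `E ∖ M`, its gain is
positive, and if it is a (non-cycle) path then whenever it begins (resp. ends) with an
edge not in `M`, the corresponding endpoint is `M`-free. -/
def IsWAugPath {V : Type*} [DecidableEq V] (G : SimpleGraph V) (w : Sym2 V → ℝ)
    (M : Finset (Sym2 V)) {u v : V} (p : G.Walk u v) : Prop :=
  0 < p.length ∧
  List.Chain' (fun e f => (e ∈ M ↔ f ∉ M)) p.edges ∧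
  0 < walkGain w M p ∧
  ((∃ h : v = u, (p.copy rfl h).IsCycle ∧ Even p.length) ∨
   (p.IsPath ∧
     (∀ e, p.edges.head? = some e → e ∉ M → u ∉ coveredVerts M) ∧
     (∀ e, p.edges.getLast? = some e → e ∉ M → v ∉ coveredVerts M)))

/-- A weighted `M`-augmenting path in `G`, bundled with its endpoints. -/
structure WAugPath {V : Type*} [DecidableEq V] (G : SimpleGraph V) (w : Sym2 V → ℝ)
    (M : Finset (Sym2 V)) where
  src : V
  tgt : V
  walk : G.Walk src tgt
  isAug : IsWAugPath G w M walk

/-- A bundled weighted augmenting path is `(M,[1,k])`-augmenting: it uses at most `k`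
non-matching edges. -/
def WAugPath.IsK {V : Type*} [DecidableEq V] {G : SimpleGraph V} {w : Sym2 V → ℝ}
    {M : Finset (Sym2 V)} (p : WAugPath G w M) (k : ℕ) : Prop :=
  (p.walk.edges.toFinset \ M).card ≤ k

/-- Two bundled weighted augmenting paths are vertex-disjoint. -/
def WAugPath.VDisj {V : Type*} [DecidableEq V] {G : SimpleGraph V} {w : Sym2 V → ℝ}
    {M M' : Finset (Sym2 V)} (p : WAugPath G w M) (q : WAugPath G w M') : Prop :=
  ∀ x : V, x ∈ p.walk.support → x ∉ q.walk.support

/-- The gain of a bundled weighted augmenting path. -/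
def WAugPath.gain {V : Type*} [DecidableEq V] {G : SimpleGraph V} {w : Sym2 V → ℝ}
    {M : Finset (Sym2 V)} (p : WAugPath G w M) : ℝ :=
  walkGain w M p.walk

/-- The gain-index `γ_M(p) = ⌈log₂ gain_M(p)⌉` of a bundled weighted augmenting path. -/
noncomputable def WAugPath.gainIndex {V : Type*} [DecidableEq V] {G : SimpleGraph V} {w : Sym2 V → ℝ}
    {M : Finset (Sym2 V)} (p : WAugPath G w M) : ℤ :=
  ⌈Real.logb 2 p.gain⌉

namespace List

variable {α : Type*} (P : α → Prop) [DecidablePred P]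

theorem IsChain.countP_add_ite_add_ite {l : List α} (hl : l.IsChain (fun a b => P a ↔ ¬ P b))
    {x y : α} (hx : l.head? = some x) (hy : l.getLast? = some y) :
    l.countP (P ·) + (if P x then 0 else 1) + (if P y then 0 else 1) = l.countP (¬ P ·) + 1 := by
  induction l generalizing x with
  | nil => simp at hx
  | cons a l ih =>
    obtain rfl : a = x := by simpa using hx
    cases l with
    | nil =>
      obtain rfl : a = y := by simpa using hy
      by_cases h : P a <;> simp [h]
    | cons b l =>
      have hab := (isChain_cons_cons.mp hl).1
      have := ih hl.tail rfl (by rwa [getLast?_cons_cons] at hy)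
      by_cases ha : P a <;> by_cases hb : P b <;> simp [ha, hb] at this hab ⊢ <;> omega

theorem IsChain.iff_not_of_even_length {l : List α} (hl : l.IsChain (fun a b => P a ↔ ¬ P b))
    {x y : α} (hx : l.head? = some x) (hy : l.getLast? = some y) (heven : Even l.length) :
    P x ↔ ¬ P y := by
  have hcount := hl.countP_add_ite_add_ite P hx hy
  have hlen := l.length_eq_countP_add_countP (P ·)
  simp only [decide_not, decide_eq_true_eq] at hcount hlen
  obtain ⟨r, hr⟩ := heven
  by_cases h₀ : P x <;> by_cases h₁ : P y <;> simp [h₀, h₁] at hcount ⊢ <;> omega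

end List

namespace SimpleGraph.Walk

variable {V : Type*} {G : SimpleGraph V} {u v x : V} {e : Sym2 V}

lemma start_mem_of_head?_edges {p : G.Walk u v} (he : p.edges.head? = some e) : u ∈ e := by
  cases p with
  | nil => simp at he
  | cons h q =>
    obtain rfl : s(u, _) = e := by simpa using he
    exact Sym2.mem_mk_left _ _

lemma end_mem_of_getLast?_edges {p : G.Walk u v} (he : p.edges.getLast? = some e) : v ∈ e := by
  have hne : p.edges ≠ [] := by rintro h; simp [h] at he
  rw [List.getLast?_eq_some_getLast hne, Option.some_inj, getLast_edges_eq_mk_penultimate_end] at he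
  exact he ▸ Sym2.mem_mk_right _ _

lemma exists_edges_head?_getLast? {p : G.Walk u v} (hp : 0 < p.length) :
    ∃ e₀ e₁, p.edges.head? = some e₀ ∧ p.edges.getLast? = some e₁ := by
  have hne : p.edges ≠ [] := edges_eq_nil.not.mpr (not_nil_iff_lt_length.mpr hp)
  exact ⟨_, _, List.head?_eq_some_head hne, List.getLast?_eq_some_getLast hne⟩

lemma eq_or_eq_or_exists_mem_edges {M : Finset (Sym2 V)} {p : G.Walk u v}
    (hp : p.edges.IsChain (fun e f => e ∈ M ↔ f ∉ M)) (hx : x ∈ p.support) :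
    x = u ∨ x = v ∨ ∃ e ∈ p.edges, e ∈ M ∧ x ∈ e := by
  obtain ⟨q, r, rfl⟩ := mem_support_iff_exists_append.mp hx
  by_cases hq : q.Nil
  · exact .inl hq.eq.symm
  by_cases hr : r.Nil
  · exact .inr (.inl hr.eq)
  obtain ⟨-, e, -, he⟩ := exists_edges_head?_getLast? (not_nil_iff_lt_length.mp hq)
  obtain ⟨f, -, hf, -⟩ := exists_edges_head?_getLast? (not_nil_iff_lt_length.mp hr)
  rw [edges_append, List.isChain_append] at hp
  have hef := hp.2.2 e he f hf
  refine .inr (.inr ?_)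
  by_cases heM : e ∈ M
  · exact ⟨e, by simp [List.mem_of_getLast? he], heM, end_mem_of_getLast?_edges he⟩
  · exact ⟨f, by simp [List.mem_of_mem_head? hf], by tauto, start_mem_of_head?_edges hf⟩

end SimpleGraph.Walk

section Matching

variable {V : Type*} {G : SimpleGraph V} {M : Finset (Sym2 V)} {e f : Sym2 V} {x y : V}

lemma IsMatchingFinset.eq_of_mem (hM : IsMatchingFinset G M) (he : e ∈ M) (hf : f ∈ M)
    (hxe : x ∈ e) (hxf : x ∈ f) : e = f :=
  by_contra fun hne => hM.2 e he f hf hne x hxe hxf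

open Classical in
noncomputable def matchedEdgeOrSelf (M : Finset (Sym2 V)) (x : V) : Sym2 V ⊕ V :=
  if h : ∃ e ∈ M, x ∈ e then .inl (Classical.choose h) else .inr x

lemma matchedEdgeOrSelf_of_mem (hM : IsMatchingFinset G M) (he : e ∈ M) (hx : x ∈ e) :
    matchedEdgeOrSelf M x = .inl e := by
  have h : ∃ e ∈ M, x ∈ e := ⟨e, he, hx⟩
  obtain ⟨hM', hx'⟩ := Classical.choose_spec h
  rw [matchedEdgeOrSelf, dif_pos h, hM.eq_of_mem hM' he hx' hx]

lemma matchedEdgeOrSelf_of_notMem (hx : x ∉ coveredVerts M) :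
    matchedEdgeOrSelf M x = .inr x :=
  dif_neg hx

lemma mem_of_matchedEdgeOrSelf_eq_inl (h : matchedEdgeOrSelf M x = .inl e) : x ∈ e := by
  unfold matchedEdgeOrSelf at h
  split_ifs at h with hx
  exact Sum.inl_injective h ▸ (Classical.choose_spec hx).2

lemma eq_of_matchedEdgeOrSelf_eq_inr (h : matchedEdgeOrSelf M x = .inr y) : x = y := by
  unfold matchedEdgeOrSelf at h
  split_ifs at h
  exact Sum.inr_injective h

end Matching

section AugmentingWalk

open SimpleGraph Walk

variable {V : Type*} [DecidableEq V] {G : SimpleGraph V} {w : Sym2 V → ℝ} {M : Finset (Sym2 V)}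
  {u v x y : V} {p : G.Walk u v}

lemma IsWAugPath.edges_nodup (hp : IsWAugPath G w M p) : p.edges.Nodup := by
  obtain ⟨-, -, -, ⟨rfl, hcyc, -⟩ | ⟨hpath, -⟩⟩ := hp
  · simpa using hcyc.isCircuit.isTrail.edges_nodup
  · exact hpath.isTrail.edges_nodup

/-- In the cycle case the even length makes the first and last edges differ in `M`-membership,
so the closing vertex is covered by one of them. -/
lemma IsWAugPath.exists_mem_edges_of_mem_coveredVerts (hp : IsWAugPath G w M p)
    (hx : x ∈ p.support) (hcov : x ∈ coveredVerts M) : ∃ e ∈ p.edges, e ∈ M ∧ x ∈ e := by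
  obtain ⟨hlen, halt, -, hends⟩ := hp
  obtain ⟨e₀, e₁, he₀, he₁⟩ := exists_edges_head?_getLast? hlen
  have hcycle : v = u → Even p.length → (e₀ ∈ M ↔ e₁ ∉ M) := fun _ heven =>
    halt.iff_not_of_even_length (· ∈ M) he₀ he₁ (by rwa [length_edges])
  rcases eq_or_eq_or_exists_mem_edges halt hx with rfl | rfl | h
  · by_cases h₀ : e₀ ∈ M
    · exact ⟨e₀, List.mem_of_mem_head? he₀, h₀, start_mem_of_head?_edges he₀⟩
    rcases hends with ⟨hvu, -, heven⟩ | ⟨-, hfree, -⟩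
    · exact ⟨e₁, List.mem_of_getLast? he₁, not_not.mp ((hcycle hvu heven).not.mp h₀),
        hvu ▸ end_mem_of_getLast?_edges he₁⟩
    · exact absurd hcov (hfree e₀ he₀ h₀)
  · by_cases h₁ : e₁ ∈ M
    · exact ⟨e₁, List.mem_of_getLast? he₁, h₁, end_mem_of_getLast?_edges he₁⟩
    rcases hends with ⟨hvu, -, heven⟩ | ⟨-, -, hfree⟩
    · exact ⟨e₀, List.mem_of_mem_head? he₀, (hcycle hvu heven).mpr h₁,
        hvu ▸ start_mem_of_head?_edges he₀⟩
    · exact absurd hcov (hfree e₁ he₁ h₁)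
  · exact h

lemma IsWAugPath.mem_support_of_matchedEdgeOrSelf_eq (hM : IsMatchingFinset G M)
    (hp : IsWAugPath G w M p) (hx : x ∈ p.support)
    (h : matchedEdgeOrSelf M y = matchedEdgeOrSelf M x) : y ∈ p.support := by
  by_cases hcov : x ∈ coveredVerts M
  · obtain ⟨e, hep, heM, hxe⟩ := hp.exists_mem_edges_of_mem_coveredVerts hx hcov
    rw [matchedEdgeOrSelf_of_mem hM heM hxe] at h
    exact mem_support_of_mem_edges hep (mem_of_matchedEdgeOrSelf_eq_inl h)
  · rw [matchedEdgeOrSelf_of_notMem hcov] at h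
    exact eq_of_matchedEdgeOrSelf_eq_inr h ▸ hx

lemma IsWAugPath.card_image_matchedEdgeOrSelf_le (hM : IsMatchingFinset G M)
    (hp : IsWAugPath G w M p) :
    (p.support.toFinset.image (matchedEdgeOrSelf M)).card ≤ (p.edges.toFinset \ M).card + 1 := by
  obtain ⟨e₀, e₁, he₀, he₁⟩ := exists_edges_head?_getLast? hp.1
  have hsub : p.support.toFinset.image (matchedEdgeOrSelf M) ⊆
      (p.edges.toFinset ∩ M).image .inl ∪
        ((if e₀ ∈ M then ∅ else {.inr u}) ∪ (if e₁ ∈ M then ∅ else {.inr v})) := by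
    intro a ha
    obtain ⟨x, hx, rfl⟩ := Finset.mem_image.mp ha
    rw [List.mem_toFinset] at hx
    by_cases hcov : x ∈ coveredVerts M
    · obtain ⟨e, hep, heM, hxe⟩ := hp.exists_mem_edges_of_mem_coveredVerts hx hcov
      rw [matchedEdgeOrSelf_of_mem hM heM hxe]
      simp [hep, heM]
    rw [matchedEdgeOrSelf_of_notMem hcov]
    rcases eq_or_eq_or_exists_mem_edges hp.2.1 hx with rfl | rfl | ⟨e, -, heM, hxe⟩
    · have : e₀ ∉ M := fun h₀ => hcov ⟨e₀, h₀, start_mem_of_head?_edges he₀⟩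
      simp [this]
    · have : e₁ ∉ M := fun h₁ => hcov ⟨e₁, h₁, end_mem_of_getLast?_edges he₁⟩
      simp [this]
    · exact absurd ⟨e, heM, hxe⟩ hcov
  have hcount := hp.2.1.countP_add_ite_add_ite (· ∈ M) he₀ he₁
  have hinter : (p.edges.toFinset ∩ M).card = p.edges.countP (· ∈ M) := by
    rw [← Finset.filter_mem_eq_inter, hp.edges_nodup.card_eq_countP]
  have hsdiff : (p.edges.toFinset \ M).card = p.edges.countP (· ∉ M) := by
    rw [Finset.sdiff_eq_filter, hp.edges_nodup.card_eq_countP]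
  calc _ ≤ _ := Finset.card_le_card hsub
    _ ≤ (p.edges.toFinset ∩ M).card + ((if e₀ ∈ M then 0 else 1) + (if e₁ ∈ M then 0 else 1)) := by
      grw [Finset.card_union_le, Finset.card_union_le, Finset.card_image_le]
      split_ifs <;> simp
    _ = _ := by omega

end AugmentingWalk

namespace Finset

theorem sum_le_nsmul_sum_of_card_fiber_le {ι κ R : Type*} [Fintype ι] [Fintype κ]
    [DecidableEq κ] [AddCommMonoid R] [PartialOrder R] [IsOrderedAddMonoid R] (f : ι → κ)
    {a : ι → R} {b : κ → R} {n : ℕ} (hb : ∀ j, 0 ≤ b j) (hab : ∀ i, a i ≤ b (f i))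
    (hn : ∀ j, #{i | f i = j} ≤ n) : ∑ i, a i ≤ n • ∑ j, b j :=
  calc ∑ i, a i = ∑ j, ∑ i with f i = j, a i := (sum_fiberwise _ _ _).symm
    _ ≤ ∑ j, ∑ i with f i = j, b j :=
      sum_le_sum fun j _ => sum_le_sum fun i hi => (mem_filter.mp hi).2 ▸ hab i
    _ = ∑ j, #{i | f i = j} • b j := by simp_rw [sum_const]
    _ ≤ ∑ j, n • b j := sum_le_sum fun j _ => nsmul_le_nsmul_left (hb j) (hn j)
    _ = n • ∑ j, b j := (smul_sum ..).symm

end Finset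

lemma le_mul_of_ceil_logb_le {c a b : ℝ} (hc : 1 < c) (ha : 0 < a) (hb : 0 < b)
    (h : ⌈Real.logb c a⌉ ≤ ⌈Real.logb c b⌉) : a ≤ c * b := by
  have : Real.logb c a < Real.logb c (c * b) := by
    rw [Real.logb_mul (by positivity) hb.ne', Real.logb_self_eq_one hc, add_comm]
    calc Real.logb c a ≤ ⌈Real.logb c a⌉ := Int.le_ceil _
      _ ≤ ⌈Real.logb c b⌉ := by exact_mod_cast h
      _ < Real.logb c b + 1 := Int.ceil_lt_add_one _
  exact ((Real.logb_lt_logb_iff hc ha (by positivity)).mp this).le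

namespace WAugPath

variable {V : Type*} [DecidableEq V] {G : SimpleGraph V} {w : Sym2 V → ℝ} {M : Finset (Sym2 V)}

lemma gain_pos (p : WAugPath G w M) : 0 < p.gain :=
  p.isAug.2.2.1

theorem card_le_of_not_vDisj (hM : IsMatchingFinset G M) {ι : Type*} {R : ι → WAugPath G w M}
    (hR : ∀ i j, i ≠ j → (R i).VDisj (R j)) (q : WAugPath G w M) (S : Finset ι)
    (hS : ∀ i ∈ S, ¬ (R i).VDisj q) : S.card ≤ (q.walk.edges.toFinset \ M).card + 1 := by
  have hmeet : ∀ i ∈ S, ∃ x ∈ (R i).walk.support, x ∈ q.walk.support := fun i hi => by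
    simpa [VDisj] using hS i hi
  have : Nonempty V := ⟨q.src⟩
  choose! x hxR hxq using hmeet
  refine (Finset.card_le_card_of_injOn (fun i => matchedEdgeOrSelf M (x i)) ?_ ?_).trans
    (q.isAug.card_image_matchedEdgeOrSelf_le hM)
  · intro i hi
    exact Finset.mem_image_of_mem _ (List.mem_toFinset.mpr (hxq i hi))
  · intro i hi j hj hij
    by_contra hne
    exact hR i j hne (x j) ((R i).isAug.mem_support_of_matchedEdgeOrSelf_eq hM (hxR i hi) hij.symm)
      (hxR j hj)

end WAugPath

theorem gain_of_index_greedy_ge_general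
    {V : Type*} [DecidableEq V] (G : SimpleGraph V)
    (w : Sym2 V → ℝ)
    (M : Finset (Sym2 V)) (hM : IsMatchingFinset G M)
    (k : ℕ)
    (m : ℕ) (P : Fin m → WAugPath G w M)
    (hPk : ∀ i, (P i).IsK k)
    (hPdisj : ∀ i j, i ≠ j → (P i).VDisj (P j))
    (mg : ℕ) (Q : Fin mg → WAugPath G w M)
    (hQk : ∀ j, (Q j).IsK k)
    (hQgreedy : ∀ q : WAugPath G w M, q.IsK k →
      ∃ j, ¬ q.VDisj (Q j) ∧ q.gainIndex ≤ (Q j).gainIndex) :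
    (1 / (2 * ((k : ℝ) + 1))) * ∑ i, (P i).gain ≤ ∑ j, (Q j).gain := by
  choose f hmeet hindex using fun i => hQgreedy (P i) (hPk i)
  have hfiber : ∀ j, (Finset.univ.filter (f · = j)).card ≤ k + 1 := fun j =>
    (WAugPath.card_le_of_not_vDisj hM hPdisj (Q j) (Finset.univ.filter (f · = j))
      fun i hi => (Finset.mem_filter.mp hi).2 ▸ hmeet i).trans
      (Nat.add_le_add_right (hQk j) 1)
  have hcharge := Finset.sum_le_nsmul_sum_of_card_fiber_le f (b := fun j => 2 * (Q j).gain)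
    (fun j => (mul_pos two_pos (Q j).gain_pos).le)
    (fun i => le_mul_of_ceil_logb_le one_lt_two (P i).gain_pos (Q (f i)).gain_pos (hindex i)) hfiber
  rw [nsmul_eq_mul, ← Finset.mul_sum] at hcharge
  rw [one_div, inv_mul_le_iff₀ (by positivity)]
  push_cast at hcharge
  linarith

/-- Let `M` be a matching in a finite simple graph `G` with positive
edge weights `w` and let `k ≥ 1`.  Let `P = aug(M,k)` be a family of pairwise
vertex-disjoint `(M,[1,k])`-augmenting paths of maximum total gain, and let `Q` be an
index-greedy family: pairwise vertex-disjoint `(M,[1,k])`-augmenting paths such that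
every `(M,[1,k])`-augmenting path intersects some member of `Q` of gain-index at
least its own (this characterizes the maximal independent sets in the intersection
graph obtained by greedy processing in nonincreasing gain-index order).  Then
`gain(Q) ≥ (1/(2(k+1))) · gain(P)`. -/
theorem gain_of_index_greedy_ge
    {V : Type*} [Fintype V] [DecidableEq V] (G : SimpleGraph V)
    (w : Sym2 V → ℝ) (hw : ∀ e ∈ G.edgeSet, 0 < w e)
    (M : Finset (Sym2 V)) (hM : IsMatchingFinset G M)
    (k : ℕ) (hk : 1 ≤ k)
    (m : ℕ) (P : Fin m → WAugPath G w M)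
    (hPk : ∀ i, (P i).IsK k)
    (hPdisj : ∀ i j, i ≠ j → (P i).VDisj (P j))
    (hPopt : ∀ (m' : ℕ) (R : Fin m' → WAugPath G w M),
      (∀ i, (R i).IsK k) → (∀ i j, i ≠ j → (R i).VDisj (R j)) →
      ∑ i, (R i).gain ≤ ∑ i, (P i).gain)
    (mg : ℕ) (Q : Fin mg → WAugPath G w M)
    (hQk : ∀ j, (Q j).IsK k)
    (hQdisj : ∀ j j', j ≠ j' → (Q j).VDisj (Q j'))
    (hQgreedy : ∀ q : WAugPath G w M, q.IsK k →
      ∃ j, ¬ q.VDisj (Q j) ∧ q.gainIndex ≤ (Q j).gainIndex) :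
    (1 / (2 * ((k : ℝ) + 1))) * ∑ i, (P i).gain ≤ ∑ j, (Q j).gain :=
  gain_of_index_greedy_ge_general G w M hM k m P hPk hPdisj mg Q hQk hQgreedy
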